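/- Let μ₁ be a locally bounded p-periodic signed Borel measure on ℝ (i.e. μ₁(·+p) = μ₁), E ∈ ℝ, and let (u₁,v₁) be a solution of −u'' + uμ₁ = Eu. Then there exists C ≥ 0 such that |u₁(x)| ≤ C e^{C|x|} for all x ∈ ℝ. The constant C can be chosen depending only on E, ‖μ₁‖_loc, ‖μ₁ − Eλ‖_loc and the initial data (u₁(0), v₁(0)). -/

import Mathlib

open MeasureTheory Filter Set Real
open scoped ENNReal

/-- A locally finite signed Borel measure on `ℝ`, represented as a formal
difference `pos - neg` of two nonnegative Borel measures. -/
structure SM where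
  pos : Measure ℝ
  neg : Measure ℝ

/-- Local finiteness of both parts (i.e. the signed measure has locally finite
total variation). -/
def SM.LocFin (μ : SM) : Prop :=
  IsLocallyFiniteMeasure μ.pos ∧ IsLocallyFiniteMeasure μ.neg

/-- The total variation `|a - b|` of the formal difference of two measures,
using the lattice-theoretic subtraction of measures (Jordan decomposition). -/
noncomputable def tvSub (a b : Measure ℝ) : Measure ℝ := (a - b) + (b - a)

/-- The total variation measure `|μ|` of a signed measure. -/
noncomputable def SM.tv (μ : SM) : Measure ℝ := tvSub μ.pos μ.neg

/-- The total variation `|μ₁ - μ₂|` of the difference of two signed measures. -/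
noncomputable def tvDiff (μ₁ μ₂ : SM) : Measure ℝ :=
  tvSub (μ₁.pos + μ₂.neg) (μ₂.pos + μ₁.neg)

/-- `‖ν‖_loc = sup_x ν([x, x+1])`. -/
noncomputable def normLoc (ν : Measure ℝ) : ℝ≥0∞ := ⨆ x : ℝ, ν (Set.Icc x (x + 1))

/-- A measure is uniformly locally bounded if `sup_x ν([x,x+1]) < ∞`. -/
def UnifLocBounded (ν : Measure ℝ) : Prop := normLoc ν < ⊤

/-- `μ` is `p`-periodic: `μ(· + p) = μ`. -/
def SM.IsPeriodic (μ : SM) (p : ℝ) : Prop :=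
  Measure.map (fun x => x + p) μ.pos = μ.pos ∧ Measure.map (fun x => x + p) μ.neg = μ.neg

/-- `I_x = [min(x,0), max(x,0)]`. -/
def Ix (x : ℝ) : Set ℝ := Set.Icc (min x 0) (max x 0)

/-- The integral `∫_A f dμ` of `f` over `A` against the signed measure `μ`. -/
noncomputable def SM.integOn (μ : SM) (f : ℝ → ℝ) (A : Set ℝ) : ℝ :=
  (∫ t in A, f t ∂μ.pos) - (∫ t in A, f t ∂μ.neg)

/-- `∫_0^x f dμ := ∫_{[0,x]} f dμ` for `x ≥ 0` and `:= -∫_{(x,0)} f dμ` for `x < 0`. -/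
noncomputable def intRight (μ : SM) (f : ℝ → ℝ) (x : ℝ) : ℝ :=
  if 0 ≤ x then μ.integOn f (Set.Icc 0 x) else - μ.integOn f (Set.Ioo x 0)

/-- `(u, v)` is a solution of `-u'' + u μ = E u`: `u` is locally absolutely
continuous with `u(x) = u(0) + ∫_0^x v`, and
`v(x) = v(0) + ∫_0^x u dμ - E ∫_0^x u` (`v` is the right limit `u'(·+)`). -/
structure IsSolution (μ : SM) (E : ℝ) (u v : ℝ → ℝ) : Prop where
  locInt : LocallyIntegrable v volume
  u_eq : ∀ x : ℝ, u x = u 0 + ∫ t in (0:ℝ)..x, v t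
  v_eq : ∀ x : ℝ, v x = v 0 + intRight μ u x - E * ∫ t in (0:ℝ)..x, u t

/-- The total variation measure `|μ - E λ|`, `λ` Lebesgue measure. -/
noncomputable def tvWithE (μ : SM) (E : ℝ) : Measure ℝ :=
  tvSub (μ.pos + ENNReal.ofReal (-E) • volume) (μ.neg + ENNReal.ofReal E • volume)

/-- Membership in the Sobolev space `W¹₂(ℝ)` (continuous representative `u`
with derivative `d`): `u, d ∈ L²` and `u(x) = u(0) + ∫_0^x d`. -/
def IsW12 (u d : ℝ → ℝ) : Prop :=
  MemLp u 2 volume ∧ MemLp d 2 volume ∧ ∀ x : ℝ, u x = u 0 + ∫ t in (0:ℝ)..x, d t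

/-- Addition of signed measures. -/
noncomputable def SM.add (a b : SM) : SM := ⟨a.pos + b.pos, a.neg + b.neg⟩

/-- The translate `T_x μ = μ(· - x)`. -/
noncomputable def SM.translate (μ : SM) (x : ℝ) : SM :=
  ⟨Measure.map (fun y => y + x) μ.pos, Measure.map (fun y => y + x) μ.neg⟩

/-- The scaled measure `μ ∘ β`, `(μ ∘ β)(A) = μ(β A)`. -/
noncomputable def SM.scale (μ : SM) (β : ℝ) : SM :=
  ⟨Measure.map (fun y => y / β) μ.pos, Measure.map (fun y => y / β) μ.neg⟩

/-- `μ` is a Gordon measure. -/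
def IsGordon (μ : SM) : Prop :=
  μ.LocFin ∧ UnifLocBounded μ.tv ∧
  ∃ (μs : ℕ → SM) (p : ℕ → ℝ),
    (∀ m, 0 < p m) ∧ (∀ m, (μs m).LocFin) ∧ (∀ m, (μs m).IsPeriodic (p m)) ∧
    (∀ m, UnifLocBounded (μs m).tv) ∧
    (∃ M : ℝ≥0∞, M < ⊤ ∧ ∀ m, normLoc (μs m).tv ≤ M) ∧
    Filter.Tendsto p Filter.atTop Filter.atTop ∧
    ∀ C : ℝ, Filter.Tendsto
      (fun m => Real.exp (C * p m) * ((tvDiff μ (μs m)) (Set.Icc (-(p m)) (2 * p m))).toReal)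
      Filter.atTop (nhds 0)

/-!
On a window `[a, y]` of length `h` the integral equations give
`sup |u| ≤ |u a| + h (|v a| + (‖μ‖_loc + |E|) sup |u|)`, because over an interval of length at most
one `|∫ u dμ| ≤ ‖μ‖_loc sup |u|` (split `μ` along a Hahn decomposition). When
`h (‖μ‖_loc + |E|) ≤ 1/2` the last term is absorbed, so `|u| + |v|` grows by at most a fixed factor
`c` from one end of a window to the other; chaining `⌈|x| / h⌉` windows from `0` gives
`|u x| ≤ c ^ (|x| / h + 1) (|u 0| + |v 0|)`.
-/

namespace MeasureTheory.Measure

variable {X : Type*} [MeasurableSpace X] (μ ν : Measure X) [IsFiniteMeasure μ] [IsFiniteMeasure ν]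

/-- Both sides are `μ ⊔ ν`. -/
theorem add_sub_eq_add_sub_swap : μ + (ν - μ) = ν + (μ - ν) := by
  rw [← toSignedMeasure_eq_toSignedMeasure_iff, toSignedMeasure_add, toSignedMeasure_add,
    add_comm ν.toSignedMeasure]
  exact sub_eq_sub_iff_add_eq_add.1 sub_toSignedMeasure_eq_toSignedMeasure_sub

theorem integral_sub_integral_eq {f : X → ℝ} (hμ : Integrable f μ) (hν : Integrable f ν) :
    ∫ x, f x ∂μ - ∫ x, f x ∂ν = ∫ x, f x ∂(μ - ν) - ∫ x, f x ∂(ν - μ) := by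
  have h := congrArg (fun ρ => ∫ x, f x ∂ρ) (add_sub_eq_add_sub_swap μ ν)
  rw [integral_add_measure hμ (hν.mono_measure sub_le),
    integral_add_measure hν (hμ.mono_measure sub_le)] at h
  linarith

end MeasureTheory.Measure

open MeasureTheory.Measure in
theorem abs_integral_sub_integral_le_tvSub (μ ν : Measure ℝ) [IsFiniteMeasure μ]
    [IsFiniteMeasure ν] {f : ℝ → ℝ} (hμ : Integrable f μ) (hν : Integrable f ν) {S : ℝ}
    (hSμ : ∀ᵐ x ∂μ, |f x| ≤ S) (hSν : ∀ᵐ x ∂ν, |f x| ≤ S) :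
    |∫ x, f x ∂μ - ∫ x, f x ∂ν| ≤ S * (tvSub μ ν univ).toReal := by
  have bound : ∀ ρ σ : Measure ℝ, [IsFiniteMeasure ρ] → (∀ᵐ x ∂ρ, |f x| ≤ S) →
      |∫ x, f x ∂(ρ - σ)| ≤ S * ((ρ - σ) univ).toReal := fun ρ σ _ hS =>
    norm_integral_le_of_norm_le_const (μ := ρ - σ) (f := f) (C := S) (ae_mono sub_le hS)
  rw [integral_sub_integral_eq μ ν hμ hν, tvSub, add_apply,
    ENNReal.toReal_add (measure_ne_top _ _) (measure_ne_top _ _), mul_add]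
  exact (abs_sub _ _).trans (add_le_add (bound μ ν hSμ) (bound ν μ hSν))

theorem tvSub_restrict (μ ν : Measure ℝ) {A : Set ℝ} (hA : MeasurableSet A) :
    tvSub (μ.restrict A) (ν.restrict A) = (tvSub μ ν).restrict A := by
  simp only [tvSub, Measure.restrict_add, Measure.restrict_sub_eq_restrict_sub_restrict hA]

namespace SM

variable {μ : SM}

theorem LocFin.integrableOn (hμ : μ.LocFin) {f : ℝ → ℝ} (hf : Continuous f) {A : Set ℝ}
    (hA : Bornology.IsBounded A) : IntegrableOn f A μ.pos ∧ IntegrableOn f A μ.neg := by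
  have := hμ.1
  have := hμ.2
  exact ⟨(hf.continuousOn.integrableOn_compact hA.isCompact_closure).mono_set subset_closure,
    (hf.continuousOn.integrableOn_compact hA.isCompact_closure).mono_set subset_closure⟩

theorem abs_integOn_le (hμ : μ.LocFin) {f : ℝ → ℝ} (hf : Continuous f) {A : Set ℝ}
    (hA : MeasurableSet A) (hAb : Bornology.IsBounded A) {S : ℝ} (hS : ∀ x ∈ A, |f x| ≤ S) :
    |μ.integOn f A| ≤ S * (μ.tv A).toReal := by
  have := hμ.1
  have := hμ.2
  have : IsFiniteMeasure (μ.pos.restrict A) := isFiniteMeasure_restrict.2 (hAb.measure_lt_top).ne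
  have : IsFiniteMeasure (μ.neg.restrict A) := isFiniteMeasure_restrict.2 (hAb.measure_lt_top).ne
  obtain ⟨hpos, hneg⟩ := hμ.integrableOn hf hAb
  have hSA : ∀ ρ : Measure ℝ, ∀ᵐ x ∂ρ.restrict A, |f x| ≤ S := fun _ =>
    ae_restrict_of_forall_mem hA hS
  have := abs_integral_sub_integral_le_tvSub _ _ hpos hneg (hSA _) (hSA _)
  rwa [tvSub_restrict _ _ hA, Measure.restrict_apply_univ] at this

theorem integOn_union (hμ : μ.LocFin) {f : ℝ → ℝ} (hf : Continuous f) {A B : Set ℝ}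
    (hd : Disjoint A B) (hB : MeasurableSet B) (hAb : Bornology.IsBounded A)
    (hBb : Bornology.IsBounded B) :
    μ.integOn f (A ∪ B) = μ.integOn f A + μ.integOn f B := by
  obtain ⟨hAp, hAn⟩ := hμ.integrableOn hf hAb
  obtain ⟨hBp, hBn⟩ := hμ.integrableOn hf hBb
  rw [integOn, integOn, integOn, setIntegral_union hd hB hAp hBp, setIntegral_union hd hB hAn hBn]
  ring

end SM

theorem measure_le_normLoc (ν : Measure ℝ) {A : Set ℝ} {x : ℝ} (hA : A ⊆ Icc x (x + 1)) :
    ν A ≤ normLoc ν :=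
  (measure_mono hA).trans (le_iSup (fun x => ν (Icc x (x + 1))) x)

theorem measure_uIoc_le_normLoc (ν : Measure ℝ) {a b : ℝ} (hab : |b - a| ≤ 1) :
    ν (uIoc a b) ≤ normLoc ν := by
  refine measure_le_normLoc ν (x := min a b) fun s hs => ⟨hs.1.le, hs.2.trans ?_⟩
  rw [← max_sub_min_eq_abs] at hab
  linarith

theorem intRight_sub_intRight {μ : SM} (hμ : μ.LocFin) {f : ℝ → ℝ} (hf : Continuous f)
    {a b : ℝ} (hab : a ≤ b) :
    intRight μ f b - intRight μ f a = μ.integOn f (Ioc a b) := by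
  rcases le_or_gt 0 a with h0a | ha0
  · rw [intRight, intRight, if_pos (h0a.trans hab), if_pos h0a, ← Icc_union_Ioc_eq_Icc h0a hab,
      μ.integOn_union hμ hf (disjoint_left.2 fun _ hx hx' => absurd hx.2 (not_le.2 hx'.1))
        measurableSet_Ioc (Metric.isBounded_Icc 0 a) (Metric.isBounded_Ioc a b)]
    ring
  rcases le_or_gt 0 b with h0b | hb0
  · rw [intRight, intRight, if_pos h0b, if_neg (not_le.2 ha0), ← Ioo_union_Icc_eq_Ioc ha0 h0b,
      μ.integOn_union hμ hf (disjoint_left.2 fun _ hx hx' => absurd hx'.1 (not_le.2 hx.2))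
        measurableSet_Icc (Metric.isBounded_Ioo a 0) (Metric.isBounded_Icc 0 b)]
    ring
  · rw [intRight, intRight, if_neg (not_le.2 hb0), if_neg (not_le.2 ha0),
      ← Ioc_union_Ioo_eq_Ioo hab hb0,
      μ.integOn_union hμ hf (disjoint_left.2 fun _ hx hx' => absurd hx.2 (not_le.2 hx'.1))
        measurableSet_Ioo (Metric.isBounded_Ioc a b) (Metric.isBounded_Ioo b 0)]
    ring

theorem abs_intRight_sub_intRight_le {μ : SM} (hμ : μ.LocFin) {f : ℝ → ℝ} (hf : Continuous f)
    {a b S : ℝ} (hS : ∀ s ∈ uIoc a b, |f s| ≤ S) :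
    |intRight μ f b - intRight μ f a| ≤ S * (μ.tv (uIoc a b)).toReal := by
  rcases le_total a b with hab | hba
  · rw [intRight_sub_intRight hμ hf hab]
    rw [uIoc_of_le hab] at hS ⊢
    exact μ.abs_integOn_le hμ hf measurableSet_Ioc (Metric.isBounded_Ioc a b) hS
  · rw [abs_sub_comm, intRight_sub_intRight hμ hf hba]
    rw [uIoc_of_ge hba] at hS ⊢
    exact μ.abs_integOn_le hμ hf measurableSet_Ioc (Metric.isBounded_Ioc b a) hS

namespace IsSolution

variable {μ : SM} {E : ℝ} {u v : ℝ → ℝ}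

theorem intervalIntegrable (sol : IsSolution μ E u v) (a b : ℝ) :
    IntervalIntegrable v volume a b :=
  intervalIntegrable_iff.2
    ((sol.locInt.integrableOn_isCompact isCompact_uIcc).mono_set uIoc_subset_uIcc)

theorem continuous (sol : IsSolution μ E u v) : Continuous u := by
  rw [funext sol.u_eq]
  exact continuous_const.add (intervalIntegral.continuous_primitive sol.intervalIntegrable 0)

theorem u_sub_u (sol : IsSolution μ E u v) (a t : ℝ) : u t - u a = ∫ s in a..t, v s := by
  rw [sol.u_eq t, sol.u_eq a, ← intervalIntegral.integral_interval_sub_left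
    (sol.intervalIntegrable 0 t) (sol.intervalIntegrable 0 a)]
  ring

theorem v_sub_v (sol : IsSolution μ E u v) (a t : ℝ) :
    v t - v a = intRight μ u t - intRight μ u a - E * ∫ s in a..t, u s := by
  rw [sol.v_eq t, sol.v_eq a, ← intervalIntegral.integral_interval_sub_left
    (sol.continuous.intervalIntegrable 0 t) (sol.continuous.intervalIntegrable 0 a)]
  ring

theorem abs_v_sub_v_le (sol : IsSolution μ E u v) (hμ : μ.LocFin) {B : ℝ} (hB0 : 0 ≤ B)
    (hB : normLoc μ.tv ≤ ENNReal.ofReal B) {a t S : ℝ} (hta : |t - a| ≤ 1)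
    (hS : ∀ s ∈ uIcc a t, |u s| ≤ S) :
    |v t - v a| ≤ S * (B + |E|) := by
  have hS0 : 0 ≤ S := (abs_nonneg _).trans (hS a left_mem_uIcc)
  have hmeasure : |intRight μ u t - intRight μ u a| ≤ S * B :=
    (abs_intRight_sub_intRight_le hμ sol.continuous fun s hs => hS s (uIoc_subset_uIcc hs)).trans
      (mul_le_mul_of_nonneg_left (ENNReal.toReal_le_of_le_ofReal hB0
        ((measure_uIoc_le_normLoc _ hta).trans hB)) hS0)
  have hlebesgue : |∫ s in a..t, u s| ≤ S := by
    have := intervalIntegral.norm_integral_le_of_norm_le_const (f := u) (C := S)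
      fun s hs => hS s (uIoc_subset_uIcc (a := a) (b := t) hs)
    rw [Real.norm_eq_abs] at this
    exact this.trans (mul_le_of_le_one_right hS0 hta)
  rw [sol.v_sub_v]
  calc |intRight μ u t - intRight μ u a - E * ∫ s in a..t, u s|
      ≤ |intRight μ u t - intRight μ u a| + |E| * |∫ s in a..t, u s| := by
        rw [← abs_mul]; exact abs_sub _ _
    _ ≤ S * B + |E| * S := by gcongr
    _ = S * (B + |E|) := by ring

theorem abs_add_abs_le_of_abs_sub_le (sol : IsSolution μ E u v) (hμ : μ.LocFin) {B : ℝ} (hB0 : 0 ≤ B)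
    (hB : normLoc μ.tv ≤ ENNReal.ofReal B) {h : ℝ} (hh1 : h ≤ 1) (hhR : h * (B + |E|) ≤ 1 / 2)
    {a y : ℝ} (hya : |y - a| ≤ h) :
    |u y| + |v y| ≤ (3 + 2 * (B + |E|)) * (|u a| + |v a|) := by
  set R := B + |E|
  have hR0 : 0 ≤ R := by positivity
  obtain ⟨z, hzJ, hz⟩ := isCompact_uIcc.exists_isMaxOn nonempty_uIcc
    (sol.continuous.abs.continuousOn (s := uIcc a y))
  set S := |u z|
  have hS0 : 0 ≤ S := abs_nonneg _
  have hSJ : ∀ t ∈ uIcc a y, |u t| ≤ S := fun t ht => hz ht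
  have hclose : ∀ t ∈ uIcc a y, |t - a| ≤ h := fun t ht => (abs_sub_left_of_mem_uIcc ht).trans hya
  have hsub : ∀ t ∈ uIcc a y, uIcc a t ⊆ uIcc a y := fun t ht =>
    uIcc_subset_uIcc left_mem_uIcc ht
  have hv : ∀ t ∈ uIcc a y, |v t| ≤ |v a| + S * R := fun t ht => by
    have := sol.abs_v_sub_v_le hμ hB0 hB ((hclose t ht).trans hh1) fun s hs => hSJ s (hsub t ht hs)
    linarith [abs_sub_abs_le_abs_sub (v t) (v a)]
  have hS : S ≤ |u a| + |v a| + S / 2 := by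
    have hint : |∫ s in a..z, v s| ≤ (|v a| + S * R) * h := by
      have := intervalIntegral.norm_integral_le_of_norm_le_const (f := v) (C := |v a| + S * R)
        fun s hs => hv s (hsub z hzJ (uIoc_subset_uIcc hs))
      rw [Real.norm_eq_abs] at this
      exact this.trans (mul_le_mul_of_nonneg_left (hclose z hzJ) (by positivity))
    calc S = |u a + (u z - u a)| := by rw [add_sub_cancel]
      _ ≤ |u a| + (|v a| + S * R) * h := by
        rw [sol.u_sub_u]; linarith [abs_add_le (u a) (∫ s in a..z, v s)]
      _ ≤ |u a| + |v a| + S / 2 := by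
        nlinarith [mul_le_mul_of_nonneg_left hh1 (abs_nonneg (v a))]
  calc |u y| + |v y| ≤ S * (1 + R) + |v a| := by
        linarith [hSJ y right_mem_uIcc, hv y right_mem_uIcc]
    _ ≤ _ := by nlinarith [abs_nonneg (u a), abs_nonneg (v a)]

end IsSolution

theorem le_pow_mul_of_forall_abs_sub_le {g : ℝ → ℝ} {c h : ℝ} (hc : 0 ≤ c)
    (hstep : ∀ a y, |y - a| ≤ h → g y ≤ c * g a) (n : ℕ) {y : ℝ} (hy : |y| ≤ n * h) :
    g y ≤ c ^ n * g 0 := by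
  induction n generalizing y with
  | zero =>
    obtain rfl : y = 0 := abs_nonpos_iff.1 (by simpa using hy)
    simp
  | succ n ih =>
    have hn : (0 : ℝ) < n + 1 := by positivity
    -- step back from `y` to the point `n / (n + 1) * y`, which lies within `n * h` of `0`
    have ha : |n / (n + 1) * y| ≤ n * h := by
      rw [abs_mul, abs_of_nonneg (by positivity)]
      calc (n : ℝ) / (n + 1) * |y| ≤ n / (n + 1) * ((n + 1) * h) := by push_cast at hy; gcongr
        _ = n * h := by field_simp
    have hya : |y - n / (n + 1) * y| ≤ h := by
      rw [show y - n / (n + 1) * y = y / (n + 1) by field_simp; ring, abs_div,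
        abs_of_pos hn, div_le_iff₀ hn]
      push_cast at hy
      linarith
    calc g y ≤ c * g (n / (n + 1) * y) := hstep _ y hya
      _ ≤ c * (c ^ n * g 0) := mul_le_mul_of_nonneg_left (ih ha) hc
      _ = c ^ (n + 1) * g 0 := by ring

theorem le_mul_exp_of_forall_abs_sub_le {g : ℝ → ℝ} {c h : ℝ} (hc : 1 ≤ c) (hh : 0 < h)
    (hg0 : 0 ≤ g 0) (hstep : ∀ a y, |y - a| ≤ h → g y ≤ c * g a) (x : ℝ) :
    g x ≤ c * g 0 * Real.exp (Real.log c / h * |x|) := by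
  set n := ⌈|x| / h⌉₊
  have hxn : |x| ≤ n * h := (div_le_iff₀ hh).1 (Nat.le_ceil _)
  have hn : (n : ℝ) ≤ |x| / h + 1 := (Nat.ceil_lt_add_one (by positivity)).le
  calc g x ≤ c ^ n * g 0 := le_pow_mul_of_forall_abs_sub_le (by linarith) hstep n hxn
    _ ≤ c ^ (|x| / h + 1) * g 0 := by
      rw [← Real.rpow_natCast]
      gcongr
    _ = c * g 0 * Real.exp (Real.log c / h * |x|) := by
      rw [Real.rpow_add (by linarith), Real.rpow_one, Real.rpow_def_of_pos (by linarith)]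
      ring_nf

/-- Solutions of `-u'' + uμ₁ = Eu` for a locally bounded
`p`-periodic signed measure `μ₁` grow at most exponentially, with a constant
depending only on `E`, `‖μ₁‖_loc`, `‖μ₁ - Eλ‖_loc` and the initial data. -/
theorem periodic_solution_exp_bound (E M₁ M₂ K : ℝ) :
    ∃ C : ℝ, 0 ≤ C ∧
      ∀ p : ℝ, 0 < p → ∀ μ₁ : SM, μ₁.LocFin → μ₁.IsPeriodic p →
        normLoc μ₁.tv ≤ ENNReal.ofReal M₁ →
        normLoc (tvWithE μ₁ E) ≤ ENNReal.ofReal M₂ →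
        ∀ u v : ℝ → ℝ, IsSolution μ₁ E u v → |u 0| ≤ K → |v 0| ≤ K →
          ∀ x : ℝ, |u x| ≤ C * Real.exp (C * |x|) := by
  set B := max M₁ 0
  set R := B + |E|
  set c := 3 + 2 * R
  set h := 1 / (2 * R + 2)
  have hB0 : 0 ≤ B := le_max_right _ _
  have hR0 : 0 ≤ R := by positivity
  have hc : 1 ≤ c := by linarith
  have hlogc : 0 ≤ Real.log c := Real.log_nonneg hc
  have hh : 0 < h := by positivity
  have hh1 : h ≤ 1 := by rw [div_le_one (by positivity)]; linarith
  have hhR : h * R ≤ 1 / 2 := by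
    rw [div_mul_eq_mul_div, one_mul, div_le_div_iff₀ (by positivity) two_pos]; linarith
  set C := max (2 * K * c) (Real.log c / h)
  refine ⟨C, le_max_of_le_right (by positivity), ?_⟩
  intro p _ μ hμ _ hM₁ _ u v sol hu0 hv0 x
  have hgrowth := le_mul_exp_of_forall_abs_sub_le hc hh (by positivity)
    (fun a y hya => sol.abs_add_abs_le_of_abs_sub_le hμ hB0 (hM₁.trans (ENNReal.ofReal_le_ofReal (le_max_left _ _)))
      hh1 hhR hya) x
  have hinit : c * (|u 0| + |v 0|) ≤ C :=
    le_max_of_le_left (by nlinarith)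
  calc |u x| ≤ c * (|u 0| + |v 0|) * Real.exp (Real.log c / h * |x|) := by
        linarith [abs_nonneg (v x)]
    _ ≤ C * Real.exp (C * |x|) := by
      gcongr
      exact le_max_right _ _
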